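/- arXiv:0808.3555 — 2 statements merged into one kernel-verified Lean document; each statement's English description precedes it below -/
import Mathlib

section
/- A smooth germ f : ℝ → ℝ with f(0) = 0, f′(0) = 0 and f″(0) ≠ 0 is 2-determined: any smooth g with g(0)=0, g′(0)=0, g″(0) = f″(0) and equal 2-jet is locally equal to f composed with a local diffeomorphism fixing 0. In particular, f is locally diffeomorphic to ±x². -/
open Filter Topology

/-- Differentiation under the integral sign for `x ↦ ∫ t in 0..1, w t * h (t * x)`. -/
lemma morse_aux_pderiv (w h : ℝ → ℝ) (hw : Continuous w) (hh : ContDiff ℝ 1 h) (x₀ : ℝ) :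
    HasDerivAt (fun x => ∫ t in (0:ℝ)..1, w t * h (t * x))
      (∫ t in (0:ℝ)..1, w t * t * deriv h (t * x₀)) x₀ := by
  have hhd : Differentiable ℝ h := hh.differentiable one_ne_zero
  have hdc : Continuous (deriv h) := hh.continuous_deriv le_rfl
  have hhc : Continuous h := hh.continuous
  obtain ⟨C, hC⟩ := (isCompact_Icc.prod (isCompact_closedBall x₀ 1)).exists_bound_of_continuousOn
    (f := fun p : ℝ × ℝ => w p.1 * p.1 * deriv h (p.1 * p.2))
    (by fun_prop : Continuous (fun p : ℝ × ℝ => w p.1 * p.1 * deriv h (p.1 * p.2))).continuousOn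
  refine (intervalIntegral.hasDerivAt_integral_of_dominated_loc_of_deriv_le
    (μ := MeasureTheory.volume) (a := 0) (b := 1) (bound := fun _ => C)
    (F := fun x t => w t * h (t * x)) (F' := fun x t => w t * t * deriv h (t * x)) (x₀ := x₀)
    (Metric.ball_mem_nhds x₀ one_pos)
    (Eventually.of_forall fun x =>
      (by fun_prop : Continuous fun t => w t * h (t * x)).aestronglyMeasurable)
    ((by fun_prop : Continuous fun t => w t * h (t * x₀)).intervalIntegrable 0 1)
    ((by fun_prop : Continuous fun t => w t * t * deriv h (t * x₀)).aestronglyMeasurable)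
    (MeasureTheory.ae_of_all _ fun t ht x hx => ?_)
    intervalIntegrable_const
    (MeasureTheory.ae_of_all _ fun t ht x hx => ?_)).2
  · rw [Set.uIoc_of_le zero_le_one] at ht
    exact hC (t, x) ⟨⟨ht.1.le, ht.2⟩, Metric.ball_subset_closedBall hx⟩
  · have h1 := (hhd (t * x)).hasDerivAt.comp x ((hasDerivAt_id x).const_mul t)
    have h2 := h1.const_mul (w t)
    exact h2.congr_deriv (by ring)

/-- Smoothness of the parametric integral `x ↦ ∫ t in 0..1, w t * h (t * x)`. -/
lemma morse_aux_param (n : ℕ) : ∀ (w h : ℝ → ℝ), Continuous w → ContDiff ℝ n h →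
    ContDiff ℝ n (fun x => ∫ t in (0:ℝ)..1, w t * h (t * x)) := by
  induction n with
  | zero =>
    intro w h hw hh
    have hhc : Continuous h := hh.continuous
    exact contDiff_zero.2 (intervalIntegral.continuous_parametric_intervalIntegral_of_continuous'
      (by fun_prop : Continuous fun p : ℝ × ℝ => w p.2 * h (p.2 * p.1)) 0 1)
  | succ n ih =>
    intro w h hw hh
    have hh1 : ContDiff ℝ 1 h := hh.of_le (by exact_mod_cast Nat.le_add_left 1 n)
    rw [Nat.cast_succ] at hh ⊢
    obtain ⟨-, -, hhd'⟩ := contDiff_succ_iff_deriv.1 hh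
    have hD := fun x₀ => morse_aux_pderiv w h hw hh1 x₀
    refine contDiff_succ_iff_deriv.2 ⟨fun x => (hD x).differentiableAt, by simp, ?_⟩
    rw [show deriv (fun x => ∫ t in (0:ℝ)..1, w t * h (t * x)) =
      fun x => ∫ t in (0:ℝ)..1, (w t * t) * deriv h (t * x) from funext fun x => (hD x).deriv]
    exact ih _ _ (by fun_prop) hhd'

/-- Smooth division: a smooth `F` with `F 0 = 0` is `x * G x` with `G` smooth. -/
lemma morse_aux_div (F : ℝ → ℝ) (hF : ContDiff ℝ (⊤ : ℕ∞) F) (hF0 : F 0 = 0) :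
    ∃ G : ℝ → ℝ, ContDiff ℝ (⊤ : ℕ∞) G ∧ (∀ x, F x = x * G x) ∧ G 0 = deriv F 0 := by
  have hd : ContDiff ℝ (⊤ : ℕ∞) (deriv F) := (contDiff_infty_iff_deriv.1 hF).2
  have hFd : Differentiable ℝ F := (contDiff_infty_iff_deriv.1 hF).1
  have hdc : Continuous (deriv F) := hd.continuous
  refine ⟨fun x => ∫ t in (0:ℝ)..1, 1 * deriv F (t * x), ?_, ?_, ?_⟩
  · exact contDiff_infty.2 fun n =>
      morse_aux_param n (fun _ => 1) (deriv F) continuous_const (contDiff_infty.1 hd n)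
  · intro x
    have h := intervalIntegral.integral_eq_sub_of_hasDerivAt (a := 0) (b := 1)
      (f := fun t => F (t * x)) (f' := fun t => deriv F (t * x) * x)
      (fun t _ => (hFd (t * x)).hasDerivAt.comp t (hasDerivAt_mul_const x))
      ((by fun_prop : Continuous fun t => deriv F (t * x) * x).intervalIntegrable 0 1)
    simp only [one_mul, zero_mul, hF0, sub_zero, intervalIntegral.integral_mul_const] at h
    simp only [one_mul]
    rw [← h]; ring
  · simp

/-- Factorization of a smooth germ with a double zero: `F x = x ^ 2 * H x`. -/
lemma morse_aux_factor (F : ℝ → ℝ) (hF : ContDiff ℝ (⊤ : ℕ∞) F) (hF0 : F 0 = 0)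
    (hF1 : deriv F 0 = 0) :
    ∃ H : ℝ → ℝ, ContDiff ℝ (⊤ : ℕ∞) H ∧ (∀ x, F x = x ^ 2 * H x) ∧
      iteratedDeriv 2 F 0 = 2 * H 0 := by
  obtain ⟨G, hGc, hFx, hG0'⟩ := morse_aux_div F hF hF0
  have hG0 : G 0 = 0 := by rw [hG0']; exact hF1
  obtain ⟨H, hHa, hGx, -⟩ := morse_aux_div G hGc hG0
  have hFH : ∀ x, F x = x ^ 2 * H x := by
    intro x; rw [hFx x, hGx x]; ring
  refine ⟨H, hHa, hFH, ?_⟩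
  have hHd : Differentiable ℝ H := (contDiff_infty_iff_deriv.1 hHa).1
  have hdHd : Differentiable ℝ (deriv H) :=
    (contDiff_infty_iff_deriv.1 (contDiff_infty_iff_deriv.1 hHa).2).1
  have E1 : deriv F =ᶠ[𝓝 0] fun x => 2 * x * H x + x ^ 2 * deriv H x := by
    filter_upwards with x
    have h1 : HasDerivAt (fun y => y ^ 2 * H y)
        ((2:ℕ) * x ^ (2-1) * H x + x ^ 2 * deriv H x) x :=
      (hasDerivAt_pow 2 x).mul ((hHd x).hasDerivAt)
    have h2 : deriv F x = deriv (fun y => y ^ 2 * H y) x := by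
      congr 1; exact funext hFH
    rw [h2, h1.deriv]; push_cast; ring
  have h2 : iteratedDeriv 2 F 0 = deriv (deriv F) 0 := by
    rw [iteratedDeriv_succ, iteratedDeriv_one]
  rw [h2, E1.deriv_eq]
  have a1 : HasDerivAt (fun x : ℝ => 2 * x * H x)
      ((2 * 1) * H 0 + (2 * 0) * deriv H 0) 0 :=
    (((hasDerivAt_id (0:ℝ)).const_mul 2)).mul (hHd 0).hasDerivAt
  have a2 : HasDerivAt (fun x : ℝ => x ^ 2 * deriv H x)
      ((2:ℕ) * (0:ℝ) ^ (2-1) * deriv H 0 + (0:ℝ) ^ 2 * deriv (deriv H) 0) 0 :=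
    (hasDerivAt_pow 2 (0:ℝ)).mul (hdHd 0).hasDerivAt
  have a3 := (a1.add a2)
  have : HasDerivAt (fun x : ℝ => 2 * x * H x + x ^ 2 * deriv H x) (2 * H 0) 0 := by
    exact a3.congr_deriv (by push_cast; ring)
  rw [this.deriv]

/-- A square-root factorization `F = s * ψ ^ 2` near `0`. -/
lemma morse_aux_sqrt (F : ℝ → ℝ) (hF : ContDiff ℝ (⊤ : ℕ∞) F) (h0 : F 0 = 0) (h1 : deriv F 0 = 0)
    (s : ℝ) (hs : s = 1 ∨ s = -1) (hpos : 0 < s * iteratedDeriv 2 F 0) :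
    ∃ ψ : ℝ → ℝ, ContDiffAt ℝ (⊤ : ℕ∞) ψ 0 ∧ ψ 0 = 0 ∧
      HasDerivAt ψ (Real.sqrt (s * iteratedDeriv 2 F 0 / 2)) 0 ∧
      (∀ᶠ x in 𝓝 0, F x = s * ψ x ^ 2) ∧ ∀ᶠ x in 𝓝 0, ContDiffAt ℝ (⊤ : ℕ∞) ψ x := by
  obtain ⟨H, hHa, hFH, h2H⟩ := morse_aux_factor F hF h0 h1
  have hH0 : s * H 0 = s * iteratedDeriv 2 F 0 / 2 := by rw [h2H]; ring
  have hH0pos : 0 < s * H 0 := by rw [hH0]; linarith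
  set u := fun x => Real.sqrt (s * H x) with hudef
  have hcu : ContDiffAt ℝ (⊤ : ℕ∞) u 0 :=
    (Real.contDiffAt_sqrt (ne_of_gt hH0pos)).comp 0 (contDiffAt_const.mul hHa.contDiffAt)
  refine ⟨fun x => x * u x, contDiffAt_id.mul hcu, by simp, ?_, ?_, ?_⟩
  · have hd : HasDerivAt (fun x => x * u x) (1 * u 0 + 0 * deriv u 0) 0 :=
      (hasDerivAt_id 0).mul (hcu.differentiableAt (by simp)).hasDerivAt
    have : (1:ℝ) * u 0 + 0 * deriv u 0 = Real.sqrt (s * iteratedDeriv 2 F 0 / 2) := by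
      rw [hudef]; simp [hH0]
    rwa [this] at hd
  · have hcont : ContinuousAt (fun x => s * H x) 0 :=
      continuousAt_const.mul hHa.continuous.continuousAt
    have hev : ∀ᶠ x in 𝓝 0, 0 < s * H x := hcont.eventually (eventually_gt_nhds hH0pos)
    filter_upwards [hev] with x hx
    have hs2 : s * s = 1 := by rcases hs with h|h <;> rw [h] <;> norm_num
    have hux : (u x) ^ 2 = s * H x := Real.sq_sqrt hx.le
    rw [hFH x, mul_pow, hux,
      show s * (x ^ 2 * (s * H x)) = s * s * (x ^ 2 * H x) from by ring, hs2, one_mul]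
  · have hcont : ContinuousAt (fun x => s * H x) 0 :=
      continuousAt_const.mul hHa.continuous.continuousAt
    have hev : ∀ᶠ x in 𝓝 0, 0 < s * H x := hcont.eventually (eventually_gt_nhds hH0pos)
    filter_upwards [hev] with x hx
    exact contDiffAt_id.mul
      ((Real.contDiffAt_sqrt (ne_of_gt hx)).comp x (contDiffAt_const.mul hHa.contDiffAt))

/-- Continuity of the derivative of a function that is smooth near `0`. -/
lemma morse_aux_deriv_cont (φ : ℝ → ℝ) (h : ∀ᶠ x in 𝓝 (0:ℝ), ContDiffAt ℝ (⊤ : ℕ∞) φ x) :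
    ContinuousAt (deriv φ) 0 := by
  obtain ⟨t, ht, hto, h0⟩ := eventually_nhds_iff.1 h
  have hon : ContDiffOn ℝ (⊤ : ℕ∞) φ t := fun x hx => (ht x hx).contDiffWithinAt
  exact (hon.continuousOn_deriv_of_isOpen hto (by simp)).continuousAt (hto.mem_nhds h0)
lemma morse_aux_main (f : ℝ → ℝ) (hf : ContDiff ℝ (⊤ : ℕ∞) f) (hf0 : f 0 = 0) (hf1 : deriv f 0 = 0)
    (s : ℝ) (hs : s = 1 ∨ s = -1) (hsc : 0 < s * iteratedDeriv 2 f 0)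
    (g : ℝ → ℝ) (hg : ContDiff ℝ (⊤ : ℕ∞) g) (hg0 : g 0 = 0) (hg1 : deriv g 0 = 0)
    (hg2 : iteratedDeriv 2 g 0 = iteratedDeriv 2 f 0) :
    ∃ (φ : ℝ → ℝ) (U : Set ℝ), IsOpen U ∧ (0 : ℝ) ∈ U ∧ φ 0 = 0 ∧
      ContDiffOn ℝ (⊤ : ℕ∞) φ U ∧ (∀ x ∈ U, deriv φ x ≠ 0) ∧ ∀ x ∈ U, g x = f (φ x) := by
  set r := Real.sqrt (s * iteratedDeriv 2 f 0 / 2) with hrdef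
  have hr0 : 0 < r := Real.sqrt_pos.2 (by linarith)
  obtain ⟨ψ, hψ, hψ0, hψ', hψe, hψev⟩ := morse_aux_sqrt f hf hf0 hf1 s hs hsc
  obtain ⟨χ, hχ, hχ0, hχ', hχe, hχev⟩ := morse_aux_sqrt g hg hg0 hg1 s hs (by rw [hg2]; exact hsc)
  rw [hg2] at hχ'
  have hψF : HasFDerivAt ψ
      ((ContinuousLinearEquiv.unitsEquivAut ℝ (Units.mk0 r hr0.ne')) : ℝ →L[ℝ] ℝ) 0 :=
    hψ'.hasFDerivAt_equiv hr0.ne'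
  set inv := hψ.localInverse hψF (by simp) with hinvdef
  have hinv0 : inv 0 = 0 := by
    have h := hψ.localInverse_apply_image hψF (by simp); rwa [hψ0] at h
  have hinvC : ContDiffAt ℝ (⊤ : ℕ∞) inv 0 := by
    have h := hψ.to_localInverse hψF (by simp); rwa [hψ0] at h
  have hrightinv : ∀ᶠ y in 𝓝 (0:ℝ), ψ (inv y) = y := by
    have h := (hψ.hasStrictFDerivAt' hψF (by simp)).eventually_right_inverse
    rwa [hψ0] at h
  have hψdne : ∀ᶠ x in 𝓝 (0:ℝ), deriv ψ x ≠ 0 :=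
    (morse_aux_deriv_cont ψ hψev).eventually_ne (by rw [hψ'.deriv]; exact hr0.ne')
  have hinvev : ∀ᶠ y in 𝓝 (0:ℝ), ContDiffAt ℝ (⊤ : ℕ∞) inv y := by
    set e := hψ.toOpenPartialHomeomorph ψ hψF (by simp) with hedef
    have he : inv = e.symm := rfl
    have htgt : (0:ℝ) ∈ e.target := by
      have h := hψ.image_mem_toOpenPartialHomeomorph_target hψF (by simp); rwa [hψ0] at h
    have hsymm0 : e.symm 0 = 0 := by rw [← he]; exact hinv0
    have htend : Tendsto e.symm (𝓝 0) (𝓝 0) := by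
      have h := (e.continuousAt_symm htgt).tendsto; rwa [hsymm0] at h
    filter_upwards [e.open_target.mem_nhds htgt, htend.eventually (hψev.and hψdne)] with y hy1 hy2
    rw [he]
    exact e.contDiffAt_symm_deriv hy2.2 hy1 (hy2.1.differentiableAt (by simp)).hasDerivAt hy2.1
  set φ := fun x => inv (χ x) with hφdef
  have hχtend : Tendsto χ (𝓝 0) (𝓝 0) := by
    have h := hχ.continuousAt.tendsto; rwa [hχ0] at h
  have hEt : ∀ᶠ x in 𝓝 (0:ℝ), ψ (φ x) = χ x := hχtend.eventually hrightinv
  have hφ0 : φ 0 = 0 := by rw [hφdef]; simp only [hχ0]; exact hinv0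
  have hφC : ContDiffAt ℝ (⊤ : ℕ∞) φ 0 := by
    refine ContDiffAt.comp 0 ?_ hχ
    rw [hχ0]; exact hinvC
  have hφev : ∀ᶠ x in 𝓝 (0:ℝ), ContDiffAt ℝ (⊤ : ℕ∞) φ x := by
    filter_upwards [hχev, hχtend.eventually hinvev] with x h1 h2
    exact h2.comp x h1
  have hφd : DifferentiableAt ℝ φ 0 := hφC.differentiableAt (by simp)
  have hφtend : Tendsto φ (𝓝 0) (𝓝 0) := by
    have h := hφC.continuousAt.tendsto; rwa [hφ0] at h
  have hcomp : HasDerivAt (fun x => ψ (φ x)) (r * deriv φ 0) 0 := by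
    have h1 : HasDerivAt ψ r (φ 0) := by rw [hφ0]; exact hψ'
    exact h1.comp 0 hφd.hasDerivAt
  have hchi2 : HasDerivAt χ (r * deriv φ 0) 0 :=
    hcomp.congr_of_eventuallyEq (Filter.EventuallyEq.symm (hEt : (fun x => ψ (φ x)) =ᶠ[𝓝 0] χ))
  have hd1 : deriv φ 0 = 1 := by
    have h := hchi2.unique hχ'
    exact mul_left_cancel₀ hr0.ne' (h.trans (mul_one r).symm)
  have hdc : ContinuousAt (deriv φ) 0 := morse_aux_deriv_cont φ hφev
  have hdne : ∀ᶠ x in 𝓝 (0:ℝ), deriv φ x ≠ 0 :=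
    hdc.eventually_ne (by rw [hd1]; exact one_ne_zero)
  have hgf : ∀ᶠ x in 𝓝 (0:ℝ), g x = f (φ x) := by
    filter_upwards [hEt, hχe, hφtend.eventually hψe] with x h1 h2 h3
    rw [h2, ← h1, ← h3]
  have hS : ∀ᶠ x in 𝓝 (0:ℝ),
      x ∈ {y | ContDiffAt ℝ (⊤ : ℕ∞) φ y ∧ deriv φ y ≠ 0 ∧ g y = f (φ y)} := by
    filter_upwards [hφev, hdne, hgf] with x a b c
    exact ⟨a, b, c⟩
  refine ⟨φ, interior {y | ContDiffAt ℝ (⊤ : ℕ∞) φ y ∧ deriv φ y ≠ 0 ∧ g y = f (φ y)},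
    isOpen_interior, mem_interior_iff_mem_nhds.2 hS, hφ0,
    fun x hx => ((interior_subset hx).1.contDiffWithinAt),
    fun x hx => (interior_subset hx).2.1,
    fun x hx => (interior_subset hx).2.2⟩

/-- One-dimensional Morse lemma / 2-determinacy: a smooth germ `f` with
`f 0 = 0`, `f' 0 = 0` and `f'' 0 ≠ 0` is 2-determined: any smooth `g` with the
same 2-jet at `0` equals `f` composed with a local diffeomorphism fixing `0`;
in particular `f` itself is locally diffeomorphic to `±x²`. -/
theorem morse_germ_two_determined (f : ℝ → ℝ) (hf : ContDiff ℝ (⊤ : ℕ∞) f)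
    (hf0 : f 0 = 0) (hf1 : deriv f 0 = 0) (hf2 : iteratedDeriv 2 f 0 ≠ 0) :
    (∀ g : ℝ → ℝ, ContDiff ℝ (⊤ : ℕ∞) g → g 0 = 0 → deriv g 0 = 0 →
      iteratedDeriv 2 g 0 = iteratedDeriv 2 f 0 →
      ∃ (φ : ℝ → ℝ) (U : Set ℝ), IsOpen U ∧ (0 : ℝ) ∈ U ∧ φ 0 = 0 ∧
        ContDiffOn ℝ (⊤ : ℕ∞) φ U ∧ (∀ x ∈ U, deriv φ x ≠ 0) ∧
        ∀ x ∈ U, g x = f (φ x)) ∧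
    (∃ (φ : ℝ → ℝ) (U : Set ℝ), IsOpen U ∧ (0 : ℝ) ∈ U ∧ φ 0 = 0 ∧
      ContDiffOn ℝ (⊤ : ℕ∞) φ U ∧ (∀ x ∈ U, deriv φ x ≠ 0) ∧
      ∀ x ∈ U, f (φ x) = (if 0 < iteratedDeriv 2 f 0 then (1:ℝ) else -1) * x^2) := by
  set c := iteratedDeriv 2 f 0 with hc
  set s : ℝ := if 0 < c then 1 else -1 with hsdef
  have hs : s = 1 ∨ s = -1 := by by_cases h : 0 < c <;> simp [hsdef, h]
  have hsc : 0 < s * c := by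
    rcases lt_or_gt_of_ne hf2 with h|h
    · rw [hsdef, if_neg (not_lt.2 h.le)]; nlinarith
    · rw [hsdef, if_pos h]; linarith
  constructor
  · intro g hg hg0 hg1 hg2
    exact morse_aux_main f hf hf0 hf1 s hs hsc g hg hg0 hg1 hg2
  · have hdg : ∀ x : ℝ, HasDerivAt (fun y : ℝ => c/2 * y^2) (c * x) x := by
      intro x
      have h := (hasDerivAt_pow 2 x).const_mul (c/2)
      exact h.congr_deriv (by push_cast; ring)
    have hGC : ContDiff ℝ (⊤ : ℕ∞) (fun y : ℝ => c/2 * y^2) :=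
      contDiff_const.mul (contDiff_id.pow 2)
    have hG0 : (fun y : ℝ => c/2 * y^2) 0 = 0 := by norm_num
    have hG1 : deriv (fun y : ℝ => c/2 * y^2) 0 = 0 := by rw [(hdg 0).deriv]; ring
    have hG2 : iteratedDeriv 2 (fun y : ℝ => c/2 * y^2) 0 = c := by
      rw [iteratedDeriv_succ, iteratedDeriv_one]
      have hd : deriv (fun y : ℝ => c/2 * y^2) = fun x => c * x := funext fun x => (hdg x).deriv
      rw [hd]
      have h : HasDerivAt (fun x : ℝ => c * x) (c * 1) 0 := (hasDerivAt_id 0).const_mul c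
      rw [h.deriv]; ring
    obtain ⟨φ, U, hUo, hU0, hφ0, hφs, hφd, hφe⟩ :=
      morse_aux_main f hf hf0 hf1 s hs hsc _ hGC hG0 hG1 hG2
    have hlpos : 0 < 2 * s / c := by
      rcases hs with h|h
      · have hcpos : 0 < c := by nlinarith
        rw [h]; positivity
      · have hcneg : c < 0 := by nlinarith
        rw [h]
        exact div_pos_of_neg_of_neg (by norm_num) hcneg
    set l := Real.sqrt (2 * s / c) with hldef
    have hl2 : l^2 = 2*s/c := Real.sq_sqrt hlpos.le
    have hl0 : l ≠ 0 := (Real.sqrt_pos.2 hlpos).ne'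
    refine ⟨fun x => φ (l * x), (fun x => l * x) ⁻¹' U,
      hUo.preimage (by fun_prop), by simpa using hU0, by simpa using hφ0, ?_, ?_, ?_⟩
    · exact hφs.comp ((contDiff_const.mul contDiff_id).contDiffOn) (fun x hx => hx)
    · intro x hx
      have hdφ : DifferentiableAt ℝ φ (l * x) :=
        (hφs.differentiableOn (by simp)).differentiableAt (hUo.mem_nhds hx)
      have h : HasDerivAt (fun y => φ (l * y)) (deriv φ (l * x) * (l * 1)) x :=
        hdφ.hasDerivAt.comp x ((hasDerivAt_id x).const_mul l)
      rw [h.deriv]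
      exact mul_ne_zero (hφd _ hx) (by simpa using hl0)
    · intro x hx
      have h := hφe (l * x) hx
      rw [← h, mul_pow, hl2]
      have hcne : c ≠ 0 := hf2
      field_simp
end

section
/- For an even smooth potential g(x, w) with g(x, −w) = g(x, w), the general tricriticality condition M·D⁴V − 3Σ(−1)^{i+j}M_{ij}κ_iκ_j = 0 specialized to V(x,y,z,w) = y²/2 + z²/2 + g(x,w) at a critical point with w = 0 reduces to the pair of conditions g_ww = 0 and g_xx·g_wwww − 3·g_xww² = 0. -/
/-- Partial derivative in the first of four arguments. -/
noncomputable def pdx (F : ℝ → ℝ → ℝ → ℝ → ℝ) : ℝ → ℝ → ℝ → ℝ → ℝ :=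
  fun x y z w => deriv (fun t => F t y z w) x

/-- Partial derivative in the second of four arguments. -/
noncomputable def pdy (F : ℝ → ℝ → ℝ → ℝ → ℝ) : ℝ → ℝ → ℝ → ℝ → ℝ :=
  fun x y z w => deriv (fun t => F x t z w) y

/-- Partial derivative in the third of four arguments. -/
noncomputable def pdz (F : ℝ → ℝ → ℝ → ℝ → ℝ) : ℝ → ℝ → ℝ → ℝ → ℝ :=
  fun x y z w => deriv (fun t => F x y t w) z

/-- Partial derivative in the fourth of four arguments. -/
noncomputable def pdw (F : ℝ → ℝ → ℝ → ℝ → ℝ) : ℝ → ℝ → ℝ → ℝ → ℝ :=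
  fun x y z w => deriv (fun t => F x y z t) w

/-- Partial derivative in the first of two arguments. -/
noncomputable def pgx (F : ℝ → ℝ → ℝ) : ℝ → ℝ → ℝ :=
  fun x w => deriv (fun t => F t w) x

/-- Partial derivative in the second of two arguments. -/
noncomputable def pgw (F : ℝ → ℝ → ℝ) : ℝ → ℝ → ℝ :=
  fun x w => deriv (fun t => F x t) w

/-- Two order parameter reduction: for the even smooth potential
`V(x,y,z,w) = y²/2 + z²/2 + g(x,w)` at a critical point `(x₀,0,0,0)` with
`g_x = 0`, `g_xx > 0`, the general non-2-determinacy condition `D²V = 0` and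
the non-4-determinacy condition `M·D⁴V − 3 Σᵢⱼ (−1)^{i+j} Mᵢⱼ κᵢ κⱼ = 0`
reduce to `g_ww = 0` and `g_xx·g_wwww − 3·g_xww² = 0` respectively. -/
theorem tricritical_reduction_two_order_parameters
    (g : ℝ → ℝ → ℝ) (hg : ContDiff ℝ (⊤ : ℕ∞) (fun p : ℝ × ℝ => g p.1 p.2))
    (heven : ∀ x w, g x (-w) = g x w)
    (x₀ : ℝ) (hcrit : pgx g x₀ 0 = 0) (hgxx : pgx (pgx g) x₀ 0 > 0)
    (V : ℝ → ℝ → ℝ → ℝ → ℝ)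
    (hV : ∀ x y z w, V x y z w = y^2/2 + z^2/2 + g x w) :
    let Vzz := pdz (pdz V) x₀ 0 0 0
    let Vzw := pdz (pdw V) x₀ 0 0 0
    let Vww := pdw (pdw V) x₀ 0 0 0
    let α := Vzw / Vzz
    let D2V := α^2 * Vzz - 2 * α * Vzw + Vww
    let D4V := α^4 * pdz (pdz (pdz (pdz V))) x₀ 0 0 0
      - 4 * α^3 * pdz (pdz (pdz (pdw V))) x₀ 0 0 0
      + 6 * α^2 * pdz (pdz (pdw (pdw V))) x₀ 0 0 0
      - 4 * α * pdz (pdw (pdw (pdw V))) x₀ 0 0 0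
      + pdw (pdw (pdw (pdw V))) x₀ 0 0 0
    let κ : Fin 3 → ℝ := ![
      α^2 * pdx (pdz (pdz V)) x₀ 0 0 0 - 2 * α * pdx (pdz (pdw V)) x₀ 0 0 0
        + pdx (pdw (pdw V)) x₀ 0 0 0,
      α^2 * pdy (pdz (pdz V)) x₀ 0 0 0 - 2 * α * pdy (pdz (pdw V)) x₀ 0 0 0
        + pdy (pdw (pdw V)) x₀ 0 0 0,
      α^2 * pdz (pdz (pdz V)) x₀ 0 0 0 - 2 * α * pdz (pdz (pdw V)) x₀ 0 0 0
        + pdz (pdw (pdw V)) x₀ 0 0 0]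
    let Mmat : Matrix (Fin 3) (Fin 3) ℝ := !![
      pdx (pdx V) x₀ 0 0 0, pdx (pdy V) x₀ 0 0 0, pdx (pdz V) x₀ 0 0 0;
      pdy (pdx V) x₀ 0 0 0, pdy (pdy V) x₀ 0 0 0, pdy (pdz V) x₀ 0 0 0;
      pdz (pdx V) x₀ 0 0 0, pdz (pdy V) x₀ 0 0 0, pdz (pdz V) x₀ 0 0 0]
    (D2V = 0 ↔ pgw (pgw g) x₀ 0 = 0) ∧
    (Mmat.det * D4V
        - 3 * ∑ i : Fin 3, ∑ j : Fin 3, (-1 : ℝ)^((i : ℕ) + (j : ℕ)) *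
            (Mmat.submatrix i.succAbove j.succAbove).det * κ i * κ j = 0 ↔
      pgx (pgx g) x₀ 0 * pgw (pgw (pgw (pgw g))) x₀ 0
        - 3 * (pgx (pgw (pgw g)) x₀ 0)^2 = 0) := by
  -- pointwise formulas for first derivatives of V
  have hx : ∀ x y z w, pdx V x y z w = pgx g x w := by
    intro x y z w
    show deriv (fun t => V t y z w) x = deriv (fun t => g t w) x
    have h : (fun t => V t y z w) = fun t => (y^2/2 + z^2/2) + g t w := by
      funext t; rw [hV]
    rw [h, deriv_const_add]
  have hw : ∀ x y z w, pdw V x y z w = pgw g x w := by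
    intro x y z w
    show deriv (fun t => V x y z t) w = deriv (fun t => g x t) w
    have h : (fun t => V x y z t) = fun t => (y^2/2 + z^2/2) + g x t := by
      funext t; rw [hV]
    rw [h, deriv_const_add]
  have hsq : ∀ y : ℝ, deriv (fun t : ℝ => t^2/2) y = y := by
    intro y
    have h := ((hasDerivAt_pow 2 y).div_const 2).deriv
    simpa using h
  have hy : ∀ x y z w, pdy V x y z w = y := by
    intro x y z w
    show deriv (fun t => V x t z w) y = y
    have h : (fun t => V x t z w) = fun t => t^2/2 + (z^2/2 + g x w) := by
      funext t; rw [hV]; ring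
    rw [h, deriv_add_const, hsq]
  have hz : ∀ x y z w, pdz V x y z w = z := by
    intro x y z w
    show deriv (fun t => V x y t w) z = z
    have h : (fun t => V x y t w) = fun t => t^2/2 + (y^2/2 + g x w) := by
      funext t; rw [hV]; ring
    rw [h, deriv_add_const, hsq]
  -- second derivatives
  have e1 : ∀ x y z w, pdz (pdz V) x y z w = 1 := by
    intro x y z w
    show deriv (fun t => pdz V x y t w) z = 1
    have h : (fun t => pdz V x y t w) = fun t => t := by funext t; rw [hz]
    rw [h]; exact deriv_id z
  have e2 : ∀ x y z w, pdz (pdw V) x y z w = 0 := by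
    intro x y z w
    show deriv (fun t => pdw V x y t w) z = 0
    have h : (fun t => pdw V x y t w) = fun _ => pgw g x w := by funext t; rw [hw]
    rw [h, deriv_const]
  have e3 : ∀ x y z w, pdw (pdw V) x y z w = pgw (pgw g) x w := by
    intro x y z w
    show deriv (fun t => pdw V x y z t) w = _
    have h : (fun t => pdw V x y z t) = fun t => pgw g x t := by funext t; rw [hw]
    rw [h]; rfl
  have e4 : ∀ x y z w, pdw (pdw (pdw V)) x y z w = pgw (pgw (pgw g)) x w := by
    intro x y z w
    show deriv (fun t => pdw (pdw V) x y z t) w = _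
    have h : (fun t => pdw (pdw V) x y z t) = fun t => pgw (pgw g) x t := by
      funext t; rw [e3]
    rw [h]; rfl
  have e5 : pdw (pdw (pdw (pdw V))) x₀ 0 0 0 = pgw (pgw (pgw (pgw g))) x₀ 0 := by
    show deriv (fun t => pdw (pdw (pdw V)) x₀ 0 0 t) 0 = _
    have h : (fun t => pdw (pdw (pdw V)) x₀ 0 0 t) = fun t => pgw (pgw (pgw g)) x₀ t := by
      funext t; rw [e4]
    rw [h]; rfl
  have e6 : pdx (pdw (pdw V)) x₀ 0 0 0 = pgx (pgw (pgw g)) x₀ 0 := by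
    show deriv (fun t => pdw (pdw V) t 0 0 0) x₀ = _
    have h : (fun t => pdw (pdw V) t 0 0 0) = fun t => pgw (pgw g) t 0 := by
      funext t; rw [e3]
    rw [h]; rfl
  have e7 : pdy (pdw (pdw V)) x₀ 0 0 0 = 0 := by
    show deriv (fun t => pdw (pdw V) x₀ t 0 0) 0 = 0
    have h : (fun t => pdw (pdw V) x₀ t 0 0) = fun _ => pgw (pgw g) x₀ 0 := by
      funext t; rw [e3]
    rw [h, deriv_const]
  have e8 : pdz (pdw (pdw V)) x₀ 0 0 0 = 0 := by
    show deriv (fun t => pdw (pdw V) x₀ 0 t 0) 0 = 0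
    have h : (fun t => pdw (pdw V) x₀ 0 t 0) = fun _ => pgw (pgw g) x₀ 0 := by
      funext t; rw [e3]
    rw [h, deriv_const]
  -- Hessian block entries
  have m11 : pdx (pdx V) x₀ 0 0 0 = pgx (pgx g) x₀ 0 := by
    show deriv (fun t => pdx V t 0 0 0) x₀ = _
    have h : (fun t => pdx V t 0 0 0) = fun t => pgx g t 0 := by funext t; rw [hx]
    rw [h]; rfl
  have m12 : pdx (pdy V) x₀ 0 0 0 = 0 := by
    show deriv (fun t => pdy V t 0 0 0) x₀ = 0
    have h : (fun t => pdy V t 0 0 0) = fun _ => (0:ℝ) := by funext t; rw [hy]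
    rw [h, deriv_const]
  have m13 : pdx (pdz V) x₀ 0 0 0 = 0 := by
    show deriv (fun t => pdz V t 0 0 0) x₀ = 0
    have h : (fun t => pdz V t 0 0 0) = fun _ => (0:ℝ) := by funext t; rw [hz]
    rw [h, deriv_const]
  have m21 : pdy (pdx V) x₀ 0 0 0 = 0 := by
    show deriv (fun t => pdx V x₀ t 0 0) 0 = 0
    have h : (fun t => pdx V x₀ t 0 0) = fun _ => pgx g x₀ 0 := by funext t; rw [hx]
    rw [h, deriv_const]
  have m22 : pdy (pdy V) x₀ 0 0 0 = 1 := by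
    show deriv (fun t => pdy V x₀ t 0 0) 0 = 1
    have h : (fun t => pdy V x₀ t 0 0) = fun t => t := by funext t; rw [hy]
    rw [h]; exact deriv_id 0
  have m23 : pdy (pdz V) x₀ 0 0 0 = 0 := by
    show deriv (fun t => pdz V x₀ t 0 0) 0 = 0
    have h : (fun t => pdz V x₀ t 0 0) = fun _ => (0:ℝ) := by funext t; rw [hz]
    rw [h, deriv_const]
  have m31 : pdz (pdx V) x₀ 0 0 0 = 0 := by
    show deriv (fun t => pdx V x₀ 0 t 0) 0 = 0
    have h : (fun t => pdx V x₀ 0 t 0) = fun _ => pgx g x₀ 0 := by funext t; rw [hx]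
    rw [h, deriv_const]
  have m32 : pdz (pdy V) x₀ 0 0 0 = 0 := by
    show deriv (fun t => pdy V x₀ 0 t 0) 0 = 0
    have h : (fun t => pdy V x₀ 0 t 0) = fun _ => (0:ℝ) := by funext t; rw [hy]
    rw [h, deriv_const]
  simp only [e1, e2, e3, e4, e5, e6, e7, e8, m11, m12, m13, m21, m22, m23, m31, m32]
  have s0 : (2 : Fin 3).succAbove 0 = 0 := by decide
  have s1 : (2 : Fin 3).succAbove 1 = 1 := by decide
  norm_num [Fin.sum_univ_three, Matrix.det_fin_three, Matrix.det_fin_two,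
    Matrix.submatrix_apply, s0, s1, Fin.lt_def, Matrix.cons_val_zero,
    Matrix.cons_val_one, Matrix.cons_val_two, Matrix.tail_cons, Matrix.head_cons, Matrix.head_fin_const]
  rw [sq]
end
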